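/- Let p be a prime and G a finite solvable group with |G| = p^n · m where gcd(p, m) = 1. Suppose N is a normal subgroup of G of order p^n (a normal p-Sylow subgroup). Then there exists a subgroup R of G of order m with G = N·R, and G is the (internal) semidirect product of N and R. -/

import Mathlib

namespace Subgroup

variable {G : Type*} [Group G] [Finite G] {H : Subgroup G} {a b : ℕ}

theorem index_eq_of_card_eq_mul (hG : Nat.card G = a * b) (hH : Nat.card H = a) :
    H.index = b := by
  have hcard := H.card_mul_index
  rw [hG, hH] at hcard
  exact Nat.eq_of_mul_eq_mul_left (hH ▸ Nat.card_pos) hcard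

theorem IsComplement'.card_eq_of_card_eq_mul {K : Subgroup G} (hHK : IsComplement' H K)
    (hG : Nat.card G = a * b) (hH : Nat.card H = a) : Nat.card K = b := by
  have hcard := hHK.card_mul_card
  rw [hG, hH] at hcard
  exact Nat.eq_of_mul_eq_mul_left (hH ▸ Nat.card_pos) hcard

theorem exists_isComplement'_card_eq_of_coprime [H.Normal] (hG : Nat.card G = a * b)
    (hH : Nat.card H = a) (hab : a.Coprime b) :
    ∃ K : Subgroup G, IsComplement' H K ∧ Nat.card K = b := by
  have hcop : (Nat.card H).Coprime H.index := by
    rwa [hH, index_eq_of_card_eq_mul hG hH]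
  obtain ⟨K, hHK⟩ := exists_right_complement'_of_coprime hcop
  exact ⟨K, hHK, hHK.card_eq_of_card_eq_mul hG hH⟩

end Subgroup

theorem normal_sylow_has_complement_general (p n m : ℕ) (hpm : Nat.gcd p m = 1)
    (G : Type*) [Group G] [Finite G]
    (hG : Nat.card G = p ^ n * m)
    (N : Subgroup G) [N.Normal] (hN : Nat.card N = p ^ n) :
    ∃ R : Subgroup G, Nat.card R = m ∧ N ⊔ R = ⊤ ∧ N ⊓ R = ⊥ := by
  obtain ⟨R, hNR, hR⟩ :=
    Subgroup.exists_isComplement'_card_eq_of_coprime hG hN (Nat.Coprime.pow_left n hpm)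
  exact ⟨R, hR, hNR.sup_eq_top, hNR.disjoint.eq_bot⟩

/-- Hall/Schur–Zassenhaus for a normal Sylow subgroup: if `G` is a
finite solvable group of order `p^n · m` with `gcd(p, m) = 1` and `N ⊴ G` has
order `p^n`, then there is a subgroup `R ≤ G` of order `m` with `G = N·R` and
`N ∩ R = 1`, i.e. `G` is the internal semidirect product of `N` and `R`. -/
theorem normal_sylow_has_complement (p n m : ℕ) (hp : p.Prime) (hpm : Nat.gcd p m = 1)
    (G : Type*) [Group G] [Finite G] (hsolv : IsSolvable G)
    (hG : Nat.card G = p ^ n * m)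
    (N : Subgroup G) [N.Normal] (hN : Nat.card N = p ^ n) :
    ∃ R : Subgroup G, Nat.card R = m ∧ N ⊔ R = ⊤ ∧ N ⊓ R = ⊥ :=
  normal_sylow_has_complement_general p n m hpm G hG N hN
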